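/- For every integer n ≥ 1 and every integer i with 0 ≤ i ≤ n+1, the Boros-Moll coefficients satisfy 4(n+1)^2 · d_i(n+1) = 2(8n^2 + 8n + 3 + 2i) · d_i(n) + 4i(2n+1) · d_{i−1}(n) − (16n^2 − 1) · d_i(n−1), where d_j(m) is taken to be 0 whenever j < 0 or j > m. -/

import Mathlib

open Polynomial

/-- The Boros-Moll polynomial `P_n(x)`. -/
noncomputable def borosMoll (n : ℕ) : Polynomial ℝ :=
  ((2 : ℝ) ^ (2 * n))⁻¹ • ∑ j ∈ Finset.range (n + 1),
    Polynomial.C ((2 : ℝ) ^ j * (Nat.choose (2 * n - 2 * j) (n - j) : ℝ) *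
      (Nat.choose (n + j) j : ℝ)) * (Polynomial.X + 1) ^ j

/-- The coefficients `d_i(n)`, with the convention `d_i(n) = 0` for `i < 0` or `i > n`. -/
noncomputable def bmCoeff (i : ℤ) (n : ℕ) : ℝ :=
  if 0 ≤ i then (borosMoll n).coeff i.toNat else 0

/-- The polynomial `Q_n(x) = ∑ d_i(n)/i! x^i`. -/
noncomputable def Q (n : ℕ) : Polynomial ℝ :=
  ∑ i ∈ Finset.range (n + 1),
    Polynomial.C ((borosMoll n).coeff i / (Nat.factorial i : ℝ)) * Polynomial.X ^ i

/-- The polynomial `R_n(x) = ∑ d_i(n)/(i+2)! x^i`. -/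
noncomputable def R (n : ℕ) : Polynomial ℝ :=
  ∑ i ∈ Finset.range (n + 1),
    Polynomial.C ((borosMoll n).coeff i / (Nat.factorial (i + 2) : ℝ)) * Polynomial.X ^ i

/-- A real polynomial has only real zeros: every complex root is real. -/
def RealRooted (p : Polynomial ℝ) : Prop :=
  ∀ z : ℂ, Polynomial.aeval z p = 0 → z.im = 0

/-- `g` strictly interlaces `f`: `deg f = deg g + 1`, the zeros
`r_1 ≥ ⋯ ≥ r_{m+1}` of `f` and `s_1 ≥ ⋯ ≥ s_m` of `g` satisfy
`r_{i+1} ≤ s_i ≤ r_i`, and `f, g` have no common zeros. -/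
def StrictlyInterlaces (g f : Polynomial ℝ) : Prop :=
  f.natDegree = g.natDegree + 1 ∧
  ∃ (s : Fin g.natDegree → ℝ) (r : Fin (g.natDegree + 1) → ℝ),
    Antitone s ∧ Antitone r ∧
    g.roots = Multiset.map s Finset.univ.val ∧
    f.roots = Multiset.map r Finset.univ.val ∧
    (∀ i : Fin g.natDegree, r i.succ ≤ s i ∧ s i ≤ r i.castSucc) ∧
    ∀ x : ℝ, ¬ (g.IsRoot x ∧ f.IsRoot x)

/-!
Write `P n = 4⁻ⁿ T n (X + 1)` with `T n = ∑ₖ a n k Xᵏ` and `a n k = 2ᵏ C(2n-2k, n-k) C(n+k, k)`.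
The numbers `a n k` are hypergeometric in both indices: `a (n+1) k`, `a n (k+1)`, `k a n (k-1)`
and `a (n-1) k` are explicit rational multiples of `a n k`. This yields the differential recurrence
`(n+1)² T (n+1) = (16n²+8n+2) T n + 4(2n+1) X (X T n)' + (8n - (16n+4) X) (T n)' - 4(16n²-1) T (n-1)`,
and substituting `X + 1` for `X` turns it into
`4(n+1)² P (n+1) = (16n²+16n+6) P n + 4 X (P n)' + 4(2n+1) X (X P n)' - (16n²-1) P (n-1)`,
whose coefficients of `Xⁱ` are the claimed recurrence for `d_i(n)`.
-/

open Finset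

namespace Polynomial

theorem coeff_X_mul_derivative {R : Type*} [Semiring R] (p : R[X]) (k : ℕ) :
    (X * derivative p).coeff k = k * p.coeff k := by
  rcases k with _ | k
  · simp
  · rw [coeff_X_mul, coeff_derivative, ← Nat.cast_succ, Nat.cast_comm]

theorem natCast_mul_coeff_X_mul {R : Type*} [Semiring R] (p : R[X]) (k : ℕ) :
    (k : R) * (X * p).coeff k = k * p.coeff (k - 1) := by
  rcases k with _ | k
  · simp
  · rw [coeff_X_mul, Nat.add_sub_cancel]

theorem derivative_comp_X_add_one {R : Type*} [CommSemiring R] (p : R[X]) :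
    (derivative p).comp (X + 1) = derivative (p.comp (X + 1)) := by
  simp [derivative_comp]

end Polynomial

noncomputable def shiftedBorosMollCoeff (n k : ℕ) : ℝ :=
  if k ≤ n then 2 ^ k * (n - k).centralBinom * (n + k).choose k else 0

namespace shiftedBorosMollCoeff

theorem of_lt {n k : ℕ} (h : n < k) : shiftedBorosMollCoeff n k = 0 :=
  if_neg h.not_ge

theorem self_add (k m : ℕ) :
    shiftedBorosMollCoeff (k + m) k = 2 ^ k * m.centralBinom * (2 * k + m).choose k := by
  rw [shiftedBorosMollCoeff, if_pos (by omega), Nat.add_sub_cancel_left,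
    show k + m + k = 2 * k + m by ring]

theorem succ_left_ratio (n k : ℕ) :
    ((n : ℝ) - k + 1) * (n + 1) * shiftedBorosMollCoeff (n + 1) k =
      2 * (2 * ((n : ℝ) - k) + 1) * (n + k + 1) * shiftedBorosMollCoeff n k := by
  rcases le_or_gt k n with hle | hlt
  · obtain ⟨m, rfl⟩ := Nat.exists_eq_add_of_le hle
    have hc : ((m + 1 : ℕ) : ℝ) * (m + 1).centralBinom = 2 * (2 * m + 1) * m.centralBinom := by
      exact_mod_cast Nat.succ_mul_centralBinom_succ m
    have hb : ((2 * k + m).choose k : ℝ) * (2 * k + m + 1) =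
        (2 * k + (m + 1)).choose k * (k + m + 1) := by
      have := Nat.choose_mul_succ_eq (2 * k + m) k
      rw [show 2 * k + m + 1 - k = k + m + 1 by omega] at this
      exact_mod_cast this
    rw [show k + m + 1 = k + (m + 1) by ring, self_add, self_add]
    push_cast at hc ⊢
    linear_combination (2 : ℝ) ^ k * (k + m + 1) * ((2 * k + (m + 1)).choose k : ℝ) * hc -
      2 ^ k * 2 * (2 * m + 1) * (m.centralBinom : ℝ) * hb
  · rcases (show n + 1 ≤ k from hlt).eq_or_lt with rfl | hlt'
    · simp [of_lt hlt]
    · simp [of_lt hlt, of_lt hlt']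

theorem succ_right_ratio (n k : ℕ) :
    (2 * ((n : ℝ) - k) - 1) * (k + 1) * shiftedBorosMollCoeff n (k + 1) =
      ((n : ℝ) - k) * (n + k + 1) * shiftedBorosMollCoeff n k := by
  rcases lt_or_ge k n with hlt | hle
  · obtain ⟨m, rfl⟩ := Nat.exists_eq_add_of_le (show k + 1 ≤ n by omega)
    have hc : ((m + 1 : ℕ) : ℝ) * (m + 1).centralBinom = 2 * (2 * m + 1) * m.centralBinom := by
      exact_mod_cast Nat.succ_mul_centralBinom_succ m
    have hb : ((2 * (k + 1) + m).choose (k + 1) : ℝ) * (k + 1) =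
        ((2 * (k + 1) + m : ℕ) : ℝ) * (2 * k + (m + 1)).choose k := by
      have := Nat.add_one_mul_choose_eq (2 * k + (m + 1)) k
      rw [show 2 * k + (m + 1) + 1 = 2 * (k + 1) + m by ring] at this
      exact_mod_cast this.symm
    rw [self_add, show k + 1 + m = k + (m + 1) by ring, self_add]
    push_cast at hc hb ⊢
    linear_combination (2 : ℝ) ^ k * 2 * (2 * m + 1) * (m.centralBinom : ℝ) * hb -
      2 ^ k * (2 * k + m + 2) * ((2 * k + (m + 1)).choose k : ℝ) * hc
  · rcases hle.eq_or_lt with rfl | hgt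
    · simp [of_lt (Nat.lt_succ_self n)]
    · simp [of_lt hgt, of_lt (hgt.trans (Nat.lt_succ_self k))]

theorem recurrence {n : ℕ} (hn : 1 ≤ n) (k : ℕ) :
    ((n : ℝ) + 1) ^ 2 * shiftedBorosMollCoeff (n + 1) k =
      (16 * (n : ℝ) ^ 2 + 8 * n + 2 - (16 * n + 4) * k) * shiftedBorosMollCoeff n k +
        4 * (2 * (n : ℝ) + 1) * k * shiftedBorosMollCoeff n (k - 1) +
        8 * (n : ℝ) * (k + 1) * shiftedBorosMollCoeff n (k + 1) -
        4 * (16 * (n : ℝ) ^ 2 - 1) * shiftedBorosMollCoeff (n - 1) k := by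
  rcases le_or_gt k n with hle | hgt
  · have hnext := succ_left_ratio n k
    have hright := succ_right_ratio n k
    have hprev := succ_left_ratio (n - 1) k
    rw [Nat.sub_add_cancel hn, Nat.cast_sub hn, Nat.cast_one] at hprev
    have hleft : (k : ℝ) * ((2 * ((n : ℝ) - k) + 1) * k * shiftedBorosMollCoeff n k) =
        k * (((n : ℝ) - k + 1) * (n + k) * shiftedBorosMollCoeff n (k - 1)) := by
      rcases k with _ | k
      · simp
      · have := succ_right_ratio n k
        push_cast at this ⊢
        linear_combination (k + 1 : ℝ) * this
    have hodd : 2 * ((n : ℝ) - k) - 1 ≠ 0 := by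
      intro h
      have h' : ((2 * (n - k) : ℕ) : ℝ) = 1 := by push_cast [Nat.cast_sub hle]; linarith
      norm_cast at h'
      omega
    have hD :
        2 * ((n : ℝ) - k + 1) * (n + 1) * (2 * ((n : ℝ) - k) - 1) * (k + 1) * (n + k) ≠ 0 := by
      have : (k : ℝ) ≤ n := by exact_mod_cast hle
      have : (1 : ℝ) ≤ n := by exact_mod_cast hn
      refine mul_ne_zero (mul_ne_zero (mul_ne_zero (mul_ne_zero ?_ ?_) hodd) ?_) ?_ <;> positivity
    refine mul_left_cancel₀ hD ?_
    linear_combination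
      ((n : ℝ) + 1) ^ 2 * (2 * (2 * ((n : ℝ) - k) - 1) * (k + 1) * (n + k)) * hnext -
      8 * (n : ℝ) * (k + 1) * (2 * ((n : ℝ) - k + 1) * (n + 1) * (n + k)) * hright -
      4 * (16 * (n : ℝ) ^ 2 - 1) * (((n : ℝ) - k + 1) * (n + 1) * (k + 1)) * hprev +
      4 * (2 * (n : ℝ) + 1) * (2 * (n + 1) * (2 * ((n : ℝ) - k) - 1) * (k + 1)) * hleft
  · rcases (show n + 1 ≤ k from hgt).eq_or_lt with rfl | hgt'
    · have h1 := succ_right_ratio (n + 1) n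
      have h2 := succ_left_ratio n n
      simp only [of_lt hgt, of_lt (Nat.lt_succ_of_lt hgt), of_lt (show n - 1 < n + 1 by omega)]
      push_cast at h1 h2 ⊢
      linear_combination ((n : ℝ) + 1) * h1 + 2 * ((n : ℝ) + 1) * h2
    · simp [of_lt hgt, of_lt hgt', of_lt (show n < k - 1 by omega), of_lt (Nat.lt_succ_of_lt hgt),
        of_lt (show n - 1 < k by omega)]

end shiftedBorosMollCoeff

noncomputable def shiftedBorosMoll (n : ℕ) : ℝ[X] :=
  ∑ k ∈ range (n + 1), C (shiftedBorosMollCoeff n k) * X ^ k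

theorem coeff_shiftedBorosMoll (n k : ℕ) :
    (shiftedBorosMoll n).coeff k = shiftedBorosMollCoeff n k := by
  rw [shiftedBorosMoll, finsetSum_coeff]
  simp only [coeff_C_mul_X_pow]
  rw [sum_ite_eq]
  split_ifs with hk
  · rfl
  · exact (shiftedBorosMollCoeff.of_lt (by simpa [Nat.lt_succ_iff] using hk)).symm

theorem shiftedBorosMoll_comp_X_add_one (n : ℕ) :
    (shiftedBorosMoll n).comp (X + 1) = C (4 ^ n) * borosMoll n := by
  rw [borosMoll, smul_eq_C_mul, ← mul_assoc, ← C_mul,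
    show (4 : ℝ) ^ n * (2 ^ (2 * n))⁻¹ = 1 by rw [pow_mul]; norm_num, C_1, one_mul,
    shiftedBorosMoll, Polynomial.sum_comp]
  refine sum_congr rfl fun j hj => ?_
  rw [mul_comp, C_comp, X_pow_comp, shiftedBorosMollCoeff,
    if_pos (by simpa [Nat.lt_succ_iff] using hj), Nat.centralBinom_eq_two_mul_choose, Nat.mul_sub]

theorem shiftedBorosMoll_recurrence {n : ℕ} (hn : 1 ≤ n) :
    C (((n : ℝ) + 1) ^ 2) * shiftedBorosMoll (n + 1) =
      C (16 * (n : ℝ) ^ 2 + 8 * n + 2) * shiftedBorosMoll n +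
        C (4 * (2 * (n : ℝ) + 1)) * (X * derivative (X * shiftedBorosMoll n)) +
        C (8 * (n : ℝ)) * derivative (shiftedBorosMoll n) -
        C (16 * (n : ℝ) + 4) * (X * derivative (shiftedBorosMoll n)) -
        C (4 * (16 * (n : ℝ) ^ 2 - 1)) * shiftedBorosMoll (n - 1) := by
  ext k
  simp only [coeff_add, coeff_sub, coeff_C_mul, coeff_X_mul_derivative, coeff_derivative,
    natCast_mul_coeff_X_mul, coeff_shiftedBorosMoll]
  linear_combination shiftedBorosMollCoeff.recurrence hn k

theorem borosMoll_recurrence {n : ℕ} (hn : 1 ≤ n) :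
    C (4 * ((n : ℝ) + 1) ^ 2) * borosMoll (n + 1) =
      C (16 * (n : ℝ) ^ 2 + 16 * n + 6) * borosMoll n +
        C 4 * (X * derivative (borosMoll n)) +
        C (4 * (2 * (n : ℝ) + 1)) * (X * derivative (X * borosMoll n)) -
        C (16 * (n : ℝ) ^ 2 - 1) * borosMoll (n - 1) := by
  have h := congrArg (·.comp (X + 1)) (shiftedBorosMoll_recurrence hn)
  simp only [mul_comp, add_comp, sub_comp, C_comp, X_comp, derivative_comp_X_add_one,
    shiftedBorosMoll_comp_X_add_one] at h
  simp only [derivative_mul, derivative_C, derivative_X, derivative_add, derivative_one] at h ⊢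
  have h4 : C ((4 : ℝ) ^ n) ≠ 0 := by simp
  refine mul_left_cancel₀ h4 ?_
  obtain ⟨m, rfl⟩ := Nat.exists_eq_add_of_le' hn
  simp only [map_add, map_sub, map_mul, map_pow, map_ofNat, map_natCast, map_one,
    Nat.add_sub_cancel] at h ⊢
  push_cast at h ⊢
  linear_combination h

theorem bmCoeff_natCast (k n : ℕ) : bmCoeff k n = (borosMoll n).coeff k := by
  simp [bmCoeff]

theorem natCast_mul_bmCoeff_natCast_sub_one (k n : ℕ) :
    (k : ℝ) * bmCoeff ((k : ℤ) - 1) n = k * (borosMoll n).coeff (k - 1) := by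
  rcases k with _ | k
  · simp
  · simp [bmCoeff]

theorem bmCoeff_four_term_recurrence_general (n : ℕ) (hn : 1 ≤ n) (i : ℤ)
    (hi0 : 0 ≤ i) :
    4 * ((n : ℝ) + 1) ^ 2 * bmCoeff i (n + 1) =
      2 * (8 * (n : ℝ) ^ 2 + 8 * (n : ℝ) + 3 + 2 * (i : ℝ)) * bmCoeff i n +
        4 * (i : ℝ) * (2 * (n : ℝ) + 1) * bmCoeff (i - 1) n -
        (16 * (n : ℝ) ^ 2 - 1) * bmCoeff i (n - 1) := by
  lift i to ℕ using hi0
  have h := congrArg (coeff · i) (borosMoll_recurrence hn)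
  simp only [coeff_add, coeff_sub, coeff_C_mul, coeff_X_mul_derivative,
    natCast_mul_coeff_X_mul] at h
  simp only [bmCoeff_natCast, Int.cast_natCast]
  linear_combination h - 4 * (2 * (n : ℝ) + 1) * natCast_mul_bmCoeff_natCast_sub_one i n

/-- For every `n ≥ 1` and every integer `0 ≤ i ≤ n+1`:
`4(n+1)²·d_i(n+1) = 2(8n²+8n+3+2i)·d_i(n) + 4i(2n+1)·d_{i−1}(n) − (16n²−1)·d_i(n−1)`. -/
theorem bmCoeff_four_term_recurrence (n : ℕ) (hn : 1 ≤ n) (i : ℤ)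
    (hi0 : 0 ≤ i) (hi1 : i ≤ (n : ℤ) + 1) :
    4 * ((n : ℝ) + 1) ^ 2 * bmCoeff i (n + 1) =
      2 * (8 * (n : ℝ) ^ 2 + 8 * (n : ℝ) + 3 + 2 * (i : ℝ)) * bmCoeff i n +
        4 * (i : ℝ) * (2 * (n : ℝ) + 1) * bmCoeff (i - 1) n -
        (16 * (n : ℝ) ^ 2 - 1) * bmCoeff i (n - 1) :=
  bmCoeff_four_term_recurrence_general n hn i hi0
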